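/- arXiv:1507.05894 — 2 statements merged into one kernel-verified Lean document; each statement's English description precedes it below -/
import Mathlib

section
/- In W = W(H, θ, z0, z1), for all integers 0 ≤ m ≤ n, the element u^m · d^n − d^{n−m} · ι( ∏_{j=n−m}^{n−1} z̃_{j+1} ) lies in the left ideal W·u. -/
/-!
STATEMENT: In `W = W(H, θ, z0, z1)`, for all integers `0 ≤ m ≤ n`, the element
`u^m · d^n − d^{n−m} · ι(∏_{j=n−m}^{n−1} z̃_{j+1})` lies in the left ideal `W·u`.
-/

/-- Generators of the triangular generalized Weyl algebra: a copy of `H` plus `d` and `u`. -/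
inductive GWAGen (H : Type) where
  | base : H → GWAGen H
  | d : GWAGen H
  | u : GWAGen H

/-- The defining relations of the triangular GWA `W(H, θ, z0, z1)`:
`ι` is an `F`-algebra map on the copy of `H`, `u·h = θ(h)·u`, `h·d = d·θ(h)`,
and `u·d = z0 + d·z1·u`. -/
inductive GWARel (F : Type) [Field F] (H : Type) [CommRing H] [Algebra F H]
    (θ : H ≃ₐ[F] H) (z0 z1 : H) :
    FreeAlgebra F (GWAGen H) → FreeAlgebra F (GWAGen H) → Prop
  | base_one : GWARel F H θ z0 z1 (FreeAlgebra.ι F (GWAGen.base (1 : H))) 1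
  | base_add (a b : H) : GWARel F H θ z0 z1
      (FreeAlgebra.ι F (GWAGen.base (a + b)))
      (FreeAlgebra.ι F (GWAGen.base a) + FreeAlgebra.ι F (GWAGen.base b))
  | base_mul (a b : H) : GWARel F H θ z0 z1
      (FreeAlgebra.ι F (GWAGen.base (a * b)))
      (FreeAlgebra.ι F (GWAGen.base a) * FreeAlgebra.ι F (GWAGen.base b))
  | base_smul (r : F) (a : H) : GWARel F H θ z0 z1
      (FreeAlgebra.ι F (GWAGen.base (r • a)))
      (r • FreeAlgebra.ι F (GWAGen.base a))
  | u_comm (a : H) : GWARel F H θ z0 z1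
      (FreeAlgebra.ι F GWAGen.u * FreeAlgebra.ι F (GWAGen.base a))
      (FreeAlgebra.ι F (GWAGen.base (θ a)) * FreeAlgebra.ι F GWAGen.u)
  | d_comm (a : H) : GWARel F H θ z0 z1
      (FreeAlgebra.ι F (GWAGen.base a) * FreeAlgebra.ι F GWAGen.d)
      (FreeAlgebra.ι F GWAGen.d * FreeAlgebra.ι F (GWAGen.base (θ a)))
  | ud : GWARel F H θ z0 z1
      (FreeAlgebra.ι F GWAGen.u * FreeAlgebra.ι F GWAGen.d)
      (FreeAlgebra.ι F (GWAGen.base z0) +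
        FreeAlgebra.ι F GWAGen.d * FreeAlgebra.ι F (GWAGen.base z1) * FreeAlgebra.ι F GWAGen.u)

/-- The triangular generalized Weyl algebra `W(H, θ, z0, z1)`, realized as a
`RingQuot` of the free `F`-algebra on the generators. -/
abbrev GWA (F : Type) [Field F] (H : Type) [CommRing H] [Algebra F H]
    (θ : H ≃ₐ[F] H) (z0 z1 : H) : Type :=
  RingQuot (GWARel F H θ z0 z1)

variable (F : Type) [Field F] (H : Type) [CommRing H] [Algebra F H]
variable (θ : H ≃ₐ[F] H) (z0 z1 : H)

/-- The canonical map `ι : H → W`. -/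
noncomputable def GWA.incl (h : H) : GWA F H θ z0 z1 :=
  RingQuot.mkAlgHom F (GWARel F H θ z0 z1) (FreeAlgebra.ι F (GWAGen.base h))

/-- The element `d` of `W`. -/
noncomputable def GWA.dd : GWA F H θ z0 z1 :=
  RingQuot.mkAlgHom F (GWARel F H θ z0 z1) (FreeAlgebra.ι F GWAGen.d)

/-- The element `u` of `W`. -/
noncomputable def GWA.uu : GWA F H θ z0 z1 :=
  RingQuot.mkAlgHom F (GWARel F H θ z0 z1) (FreeAlgebra.ι F GWAGen.u)

/-- `z'_n = ∏_{i=0}^{n-1} θ^i(z1)`. -/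
noncomputable def zp (n : ℕ) : H := ∏ i ∈ Finset.range n, (θ ^ i) z1

/-- `z̃_n = ∑_{i=0}^{n-1} θ^i(z0 · z'_{n-1-i})`. -/
noncomputable def zt (n : ℕ) : H := ∑ i ∈ Finset.range n, (θ ^ i) (z0 * zp F H θ z1 (n - 1 - i))

section CoreRing
variable {R : Type*} [Ring R]

lemma gwa_core (X Y Z d u A0 A1 B C D E : R)
    (hY : Y = X * d) (hZ : Z = Y * d) (hud : u * d = B + d * D * u)
    (hCd : C * d = d * E) (hAd : A0 * d = d * A1) (hCB : C * B = B * C) :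
    (X * A0 + Y * C * u) * d = Y * (A1 + B * C) + Z * (E * D) * u := by
  subst hY hZ
  have e1 : (X * A0 + X * d * C * u) * d = X * (A0 * d) + X * d * C * (u * d) := by
    noncomm_ring
  rw [e1, hAd, hud]
  have e2 : X * (d * A1) + X * d * C * (B + d * D * u) =
      X * d * A1 + X * d * (C * B) + X * d * (C * d) * (D * u) := by noncomm_ring
  rw [e2, hCB, hCd]
  noncomm_ring

lemma gwa_side (X Y A B Q Q' u w : R) (h2 : u * Q = Q' * u) :
    (X * A + Y * B * u) * Q + u * (w * u) - X * (A * Q) = (Y * B * Q' + u * w) * u := by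
  have e1 : (X * A + Y * B * u) * Q + u * (w * u) - X * (A * Q) =
      Y * B * (u * Q) + u * w * u := by noncomm_ring
  rw [e1, h2]
  noncomm_ring

end CoreRing

lemma GWA.incl_one : GWA.incl F H θ z0 z1 1 = 1 := by
  unfold GWA.incl
  rw [RingQuot.mkAlgHom_rel _ GWARel.base_one, map_one]

lemma GWA.incl_mul (a b : H) : GWA.incl F H θ z0 z1 (a * b) =
    GWA.incl F H θ z0 z1 a * GWA.incl F H θ z0 z1 b := by
  unfold GWA.incl
  rw [RingQuot.mkAlgHom_rel _ (GWARel.base_mul a b), map_mul]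

lemma GWA.incl_add (a b : H) : GWA.incl F H θ z0 z1 (a + b) =
    GWA.incl F H θ z0 z1 a + GWA.incl F H θ z0 z1 b := by
  unfold GWA.incl
  rw [RingQuot.mkAlgHom_rel _ (GWARel.base_add a b), map_add]

lemma GWA.u_comm (a : H) : GWA.uu F H θ z0 z1 * GWA.incl F H θ z0 z1 a =
    GWA.incl F H θ z0 z1 (θ a) * GWA.uu F H θ z0 z1 := by
  unfold GWA.incl GWA.uu
  rw [← map_mul, RingQuot.mkAlgHom_rel _ (GWARel.u_comm a), map_mul]

lemma GWA.d_comm (a : H) : GWA.incl F H θ z0 z1 a * GWA.dd F H θ z0 z1 =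
    GWA.dd F H θ z0 z1 * GWA.incl F H θ z0 z1 (θ a) := by
  unfold GWA.incl GWA.dd
  rw [← map_mul, RingQuot.mkAlgHom_rel _ (GWARel.d_comm a), map_mul]

lemma GWA.ud_rel : GWA.uu F H θ z0 z1 * GWA.dd F H θ z0 z1 =
    GWA.incl F H θ z0 z1 z0 +
      GWA.dd F H θ z0 z1 * GWA.incl F H θ z0 z1 z1 * GWA.uu F H θ z0 z1 := by
  unfold GWA.incl GWA.dd GWA.uu
  rw [← map_mul, RingQuot.mkAlgHom_rel _ GWARel.ud, map_add, map_mul, map_mul]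

lemma zp_succ (k : ℕ) : zp F H θ z1 (k + 1) = θ (zp F H θ z1 k) * z1 := by
  unfold zp
  rw [Finset.prod_range_succ', map_prod]
  congr 1
  refine Finset.prod_congr rfl fun i _ => ?_
  rw [pow_succ', AlgEquiv.mul_apply]

lemma zt_succ (k : ℕ) : zt F H θ z0 z1 (k + 1) =
    θ (zt F H θ z0 z1 k) + z0 * zp F H θ z1 k := by
  unfold zt
  rw [Finset.sum_range_succ', map_sum]
  congr 1
  · refine Finset.sum_congr rfl fun i _ => ?_
    rw [show k + 1 - 1 - (i + 1) = k - 1 - i from by omega, pow_succ', AlgEquiv.mul_apply]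

lemma zt_one : zt F H θ z0 z1 1 = z0 := by
  simp [zt, zp]

lemma zp_one : zp F H θ z1 1 = z1 := by
  simp [zp]

lemma GWA.u_dpow (k : ℕ) : GWA.uu F H θ z0 z1 * (GWA.dd F H θ z0 z1) ^ (k + 1) =
    (GWA.dd F H θ z0 z1) ^ k * GWA.incl F H θ z0 z1 (zt F H θ z0 z1 (k + 1)) +
      (GWA.dd F H θ z0 z1) ^ (k + 1) * GWA.incl F H θ z0 z1 (zp F H θ z1 (k + 1)) *
        GWA.uu F H θ z0 z1 := by
  induction k with
  | zero =>
      simpa [zt_one, zp_one] using GWA.ud_rel F H θ z0 z1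
  | succ k ih =>
      have h1 : GWA.uu F H θ z0 z1 * (GWA.dd F H θ z0 z1) ^ (k + 1 + 1) =
          (GWA.uu F H θ z0 z1 * (GWA.dd F H θ z0 z1) ^ (k + 1)) * GWA.dd F H θ z0 z1 := by
        rw [mul_assoc, ← pow_succ]
      rw [h1, ih, zt_succ F H θ z0 z1 (k + 1), zp_succ F H θ z1 (k + 1),
        GWA.incl_add, GWA.incl_mul, GWA.incl_mul]
      have hCB : GWA.incl F H θ z0 z1 (zp F H θ z1 (k + 1)) * GWA.incl F H θ z0 z1 z0 =
          GWA.incl F H θ z0 z1 z0 * GWA.incl F H θ z0 z1 (zp F H θ z1 (k + 1)) := by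
        rw [← GWA.incl_mul, ← GWA.incl_mul, mul_comm]
      exact gwa_core _ _ _ _ _ _ _ _ _ _ _ (pow_succ _ k) (pow_succ _ (k + 1))
        (GWA.ud_rel F H θ z0 z1) (GWA.d_comm F H θ z0 z1 _) (GWA.d_comm F H θ z0 z1 _) hCB

theorem upow_mul_dpow_mem_left_ideal (m n : ℕ) (hmn : m ≤ n) :
    ∃ w : GWA F H θ z0 z1,
      (GWA.uu F H θ z0 z1) ^ m * (GWA.dd F H θ z0 z1) ^ n -
          (GWA.dd F H θ z0 z1) ^ (n - m) *
            GWA.incl F H θ z0 z1 (∏ j ∈ Finset.Ico (n - m) n, zt F H θ z0 z1 (j + 1)) =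
        w * GWA.uu F H θ z0 z1 := by
  induction m with
  | zero =>
      exact ⟨0, by simp [GWA.incl_one]⟩
  | succ m ih =>
      obtain ⟨w, hw⟩ := ih (Nat.le_of_succ_le hmn)
      set k := n - (m + 1) with hk
      have hnm : n - m = k + 1 := by omega
      have hkn : k < n := by omega
      rw [hnm] at hw
      have hum : GWA.uu F H θ z0 z1 ^ m * GWA.dd F H θ z0 z1 ^ n =
          GWA.dd F H θ z0 z1 ^ (k + 1) *
            GWA.incl F H θ z0 z1 (∏ j ∈ Finset.Ico (k + 1) n, zt F H θ z0 z1 (j + 1)) +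
          w * GWA.uu F H θ z0 z1 := sub_eq_iff_eq_add'.mp hw
      refine ⟨GWA.dd F H θ z0 z1 ^ (k + 1) * GWA.incl F H θ z0 z1 (zp F H θ z1 (k + 1)) *
          GWA.incl F H θ z0 z1 (θ (∏ j ∈ Finset.Ico (k + 1) n, zt F H θ z0 z1 (j + 1))) +
          GWA.uu F H θ z0 z1 * w, ?_⟩
      rw [Finset.prod_eq_prod_Ico_succ_bot hkn, GWA.incl_mul]
      have h1 : GWA.uu F H θ z0 z1 ^ (m + 1) * GWA.dd F H θ z0 z1 ^ n =
          GWA.uu F H θ z0 z1 * (GWA.uu F H θ z0 z1 ^ m * GWA.dd F H θ z0 z1 ^ n) := by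
        rw [pow_succ', mul_assoc]
      rw [h1, hum, mul_add, ← mul_assoc (GWA.uu F H θ z0 z1) (GWA.dd F H θ z0 z1 ^ (k + 1)),
        GWA.u_dpow]
      exact gwa_side _ _ _ _ _ _ _ _ (GWA.u_comm F H θ z0 z1 _)
end

section
/- Assume additionally that z1 is a unit of H. For n ∈ ℤ let W[n] denote the F-linear span in W of { d^a · ι(h) · u^b : h ∈ H, a, b ∈ ℕ, (b : ℤ) − a = n }. Then W[0] is closed under multiplication (an F-subalgebra of W), each W[n] satisfies W[0]·W[n] ⊆ W[n], and each W[n] is a free left W[0]-module of rank one: there exists x ∈ W[n] such that the map W[0] → W[n] sending a to a·x is bijective. -/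
variable (F : Type) [Field F] (H : Type) [CommRing H] [Algebra F H]
variable (θ : H ≃ₐ[F] H) (z0 z1 : H)

/-- The `n`-th graded piece `W[n]` of `W` (for the grading with `deg u = 1`,
`deg d = -1`, `deg H = 0`). -/
noncomputable def GWA.graded (n : ℤ) : Submodule F (GWA F H θ z0 z1) :=
  Submodule.span F
    { x : GWA F H θ z0 z1 | ∃ a b : ℕ, ∃ h : H, (b : ℤ) - (a : ℤ) = n ∧
        x = (GWA.dd F H θ z0 z1) ^ a * GWA.incl F H θ z0 z1 h * (GWA.uu F H θ z0 z1) ^ b }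

/-!
Every product of monomials reduces to monomials via `u d^k = d^k c_k u + d^(k-1) e_k`, with
`c_k = ∏_{i<k} θ^i(z1)`, so the pieces `W[n]` multiply as a grading. The piece `W[n]` is
free on `u^n` for `n ≥ 0` and on `d^(-n)` for `n < 0`. Right multiplication by `u^k` maps
`d^a h u^a` to `d^a h u^(a+k)`; right multiplication by `d^k` maps it to `d^(a+k) (θ^k(h) c) u^a`
modulo monomials of lower `u`-exponent, where `c` is a product of `θ`-conjugates of `z1`, hence a
unit. This triangularity in the `u`-exponent gives surjectivity by induction, and injectivity by
reading off leading coefficients in the normal-form representation of `W` on `ℕ × ℕ →₀ H`.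
-/

open Finset

theorem Submodule.existsUnique_mul_eq_of_le_map_mulRight {R A : Type*} [CommRing R] [Ring A]
    [Algebra R A] {P Q : Submodule R A} {x : A} (hsurj : Q ≤ P.map (LinearMap.mulRight R x))
    (hinj : ∀ w ∈ P, w * x = 0 → w = 0) {y : A} (hy : y ∈ Q) :
    ∃! a, a ∈ P ∧ a * x = y := by
  obtain ⟨a, ha, rfl⟩ := hsurj hy
  refine ⟨a, ⟨ha, rfl⟩, fun a' ⟨ha', hax⟩ => sub_eq_zero.1 (hinj _ (P.sub_mem ha' ha) ?_)⟩
  rw [sub_mul, hax, LinearMap.mulRight_apply, sub_self]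

namespace GWA

variable {F H θ z0 z1}

local notation "W" => GWA F H θ z0 z1
local notation "D" => dd F H θ z0 z1
local notation "U" => uu F H θ z0 z1

theorem incl_one_s10 : incl F H θ z0 z1 1 = 1 := by
  simpa [incl] using RingQuot.mkAlgHom_rel F (GWARel.base_one (θ := θ) (z0 := z0) (z1 := z1))

theorem incl_add_s10 (a b : H) :
    incl F H θ z0 z1 (a + b) = incl F H θ z0 z1 a + incl F H θ z0 z1 b := by
  simpa [incl] using
    RingQuot.mkAlgHom_rel F (GWARel.base_add (θ := θ) (z0 := z0) (z1 := z1) a b)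

theorem incl_mul_s10 (a b : H) :
    incl F H θ z0 z1 (a * b) = incl F H θ z0 z1 a * incl F H θ z0 z1 b := by
  simpa [incl] using
    RingQuot.mkAlgHom_rel F (GWARel.base_mul (θ := θ) (z0 := z0) (z1 := z1) a b)

theorem incl_smul (r : F) (a : H) : incl F H θ z0 z1 (r • a) = r • incl F H θ z0 z1 a := by
  simpa [incl] using
    RingQuot.mkAlgHom_rel F (GWARel.base_smul (θ := θ) (z0 := z0) (z1 := z1) r a)

variable (F H θ z0 z1) in
noncomputable def inclAlgHom : H →ₐ[F] W where
  toFun := incl F H θ z0 z1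
  map_one' := incl_one_s10
  map_mul' := incl_mul_s10
  map_zero' := by simpa using incl_add_s10 (θ := θ) (z0 := z0) (z1 := z1) (0 : H) 0
  map_add' := incl_add_s10
  commutes' r := by
    rw [Algebra.algebraMap_eq_smul_one, incl_smul, incl_one_s10, Algebra.algebraMap_eq_smul_one]

local notation "ι" => inclAlgHom F H θ z0 z1

theorem inclAlgHom_apply (h : H) : ι h = incl F H θ z0 z1 h := rfl

theorem u_mul_ι (h : H) : U * ι h = ι (θ h) * U := by
  simpa [inclAlgHom_apply, incl, uu] using
    RingQuot.mkAlgHom_rel F (GWARel.u_comm (θ := θ) (z0 := z0) (z1 := z1) h)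

theorem ι_mul_d (h : H) : ι h * D = D * ι (θ h) := by
  simpa [inclAlgHom_apply, incl, dd] using
    RingQuot.mkAlgHom_rel F (GWARel.d_comm (θ := θ) (z0 := z0) (z1 := z1) h)

theorem u_mul_d : U * D = ι z0 + D * ι z1 * U := by
  simpa [inclAlgHom_apply, incl, dd, uu] using
    RingQuot.mkAlgHom_rel F (GWARel.ud (θ := θ) (z0 := z0) (z1 := z1))

theorem upow_mul_ι (b : ℕ) (h : H) : U ^ b * ι h = ι ((θ ^ b) h) * U ^ b := by
  induction b generalizing h with
  | zero => simp
  | succ b ih => rw [pow_succ, mul_assoc, u_mul_ι, ← mul_assoc, ih, mul_assoc, pow_succ]; rfl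

theorem ι_mul_dpow (a : ℕ) (h : H) : ι h * D ^ a = D ^ a * ι ((θ ^ a) h) := by
  induction a generalizing h with
  | zero => simp
  | succ a ih => rw [pow_succ', ← mul_assoc, ι_mul_d, mul_assoc, ih, ← mul_assoc, pow_succ θ]; rfl

variable (F H θ z0 z1) in
noncomputable def monomial (a b : ℕ) : H →ₗ[F] W :=
  LinearMap.mulRight F (U ^ b) ∘ₗ LinearMap.mulLeft F (D ^ a) ∘ₗ (ι).toLinearMap

local notation "mono" => monomial F H θ z0 z1

theorem monomial_apply (a b : ℕ) (h : H) : mono a b h = D ^ a * ι h * U ^ b := rfl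

variable (F H θ z0 z1) in
noncomputable def gradedLT (n : ℤ) (B : ℕ) : Submodule F W :=
  Submodule.span F {x | ∃ a b : ℕ, ∃ h : H, b < B ∧ (b : ℤ) - a = n ∧ x = mono a b h}

local notation "W[" n "]" => graded F H θ z0 z1 n
local notation "W[" n "|<" B "]" => gradedLT F H θ z0 z1 n B

theorem monomial_mem_graded {a b : ℕ} {n : ℤ} (h : H) (hn : (b : ℤ) - a = n) :
    mono a b h ∈ W[n] :=
  Submodule.subset_span ⟨a, b, h, hn, rfl⟩

theorem monomial_mem_gradedLT {a b B : ℕ} {n : ℤ} (h : H) (hb : b < B) (hn : (b : ℤ) - a = n) :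
    mono a b h ∈ W[n|<B] :=
  Submodule.subset_span ⟨a, b, h, hb, hn, rfl⟩

theorem graded_le {n : ℤ} {S : Submodule F W}
    (hS : ∀ a b : ℕ, ∀ h : H, (b : ℤ) - a = n → mono a b h ∈ S) : W[n] ≤ S :=
  Submodule.span_le.2 fun _ ⟨a, b, h, hn, hx⟩ => hx ▸ hS a b h hn

theorem gradedLT_le {n : ℤ} {B : ℕ} {S : Submodule F W}
    (hS : ∀ a b : ℕ, ∀ h : H, b < B → (b : ℤ) - a = n → mono a b h ∈ S) : W[n|<B] ≤ S :=
  Submodule.span_le.2 fun _ ⟨a, b, h, hb, hn, hx⟩ => hx ▸ hS a b h hb hn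

theorem gradedLT_le_graded (n : ℤ) (B : ℕ) : W[n|<B] ≤ W[n] :=
  gradedLT_le fun _ _ h _ hn => monomial_mem_graded h hn

theorem gradedLT_mono {n : ℤ} {B B' : ℕ} (hB : B ≤ B') : W[n|<B] ≤ W[n|<B'] :=
  gradedLT_le fun _ _ h hb hn => monomial_mem_gradedLT h (hb.trans_le hB) hn

theorem gradedLT_zero (n : ℤ) : W[n|<0] = ⊥ :=
  eq_bot_iff.2 <| gradedLT_le fun _ _ _ hb => absurd hb (Nat.not_lt_zero _)

theorem exists_mem_gradedLT {n : ℤ} {x : W} (hx : x ∈ W[n]) : ∃ B, x ∈ W[n|<B] := by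
  induction hx using Submodule.span_induction with
  | mem x hx =>
    obtain ⟨a, b, h, hn, rfl⟩ := hx
    exact ⟨b + 1, monomial_mem_gradedLT h b.lt_succ_self hn⟩
  | zero => exact ⟨0, zero_mem _⟩
  | add x y _ _ hx hy =>
    obtain ⟨B, hB⟩ := hx
    obtain ⟨B', hB'⟩ := hy
    exact ⟨max B B', add_mem (gradedLT_mono (le_max_left _ _) hB)
      (gradedLT_mono (le_max_right _ _) hB')⟩
  | smul r x _ hx =>
    obtain ⟨B, hB⟩ := hx
    exact ⟨B, Submodule.smul_mem _ r hB⟩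

theorem exists_sub_monomial_mem_gradedLT {a B : ℕ} {n : ℤ} (hn : (B : ℤ) - a = n) {x : W}
    (hx : x ∈ W[n|<B + 1]) : ∃ g, x - mono a B g ∈ W[n|<B] := by
  induction hx using Submodule.span_induction with
  | mem x hx =>
    obtain ⟨a', b, h, hb, hn', rfl⟩ := hx
    rcases (Nat.lt_succ_iff.1 hb).lt_or_eq with hb | rfl
    · exact ⟨0, by simpa using monomial_mem_gradedLT h hb hn'⟩
    · obtain rfl : a' = a := by omega
      exact ⟨h, by simp⟩
  | zero => exact ⟨0, by simp⟩
  | add x y _ _ hx hy =>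
    obtain ⟨g, hg⟩ := hx
    obtain ⟨g', hg'⟩ := hy
    exact ⟨g + g', by simpa [map_add, add_sub_add_comm] using add_mem hg hg'⟩
  | smul r x _ hx =>
    obtain ⟨g, hg⟩ := hx
    exact ⟨r • g, by simpa [map_smul, smul_sub] using Submodule.smul_mem _ r hg⟩

theorem map_mem_gradedLT {n n' : ℤ} {B B' : ℕ} (f : W →ₗ[F] W)
    (hf : ∀ a b : ℕ, ∀ h : H, b < B → (b : ℤ) - a = n → f (mono a b h) ∈ W[n'|<B'])
    {x : W} (hx : x ∈ W[n|<B]) : f x ∈ W[n'|<B'] :=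
  gradedLT_le (S := W[n'|<B'].comap f) hf hx

theorem ι_mul_monomial (g : H) (a b : ℕ) (h : H) : ι g * mono a b h = mono a b ((θ ^ a) g * h) := by
  simp only [monomial_apply, ← mul_assoc, ι_mul_dpow, map_mul]

theorem dpow_mul_monomial (k a b : ℕ) (h : H) : D ^ k * mono a b h = mono (k + a) b h := by
  simp only [monomial_apply, ← mul_assoc, pow_add]

theorem monomial_mul_ι_mul_upow (a b : ℕ) (h g : H) (c : ℕ) :
    mono a b h * (ι g * U ^ c) = mono a (b + c) (h * (θ ^ b) g) := by
  simp only [monomial_apply, mul_assoc, ← mul_assoc (U ^ b), upow_mul_ι, map_mul, pow_add]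

theorem ι_mul_mem_gradedLT (g : H) {n : ℤ} {B : ℕ} {x : W} (hx : x ∈ W[n|<B]) :
    ι g * x ∈ W[n|<B] :=
  map_mem_gradedLT (LinearMap.mulLeft F (ι g)) (fun _ _ _ hb hn => by
    simpa only [LinearMap.mulLeft_apply, ι_mul_monomial] using monomial_mem_gradedLT _ hb hn) hx

theorem dpow_mul_mem_gradedLT (k : ℕ) {n : ℤ} {B : ℕ} {x : W} (hx : x ∈ W[n|<B]) :
    D ^ k * x ∈ W[n - k|<B] :=
  map_mem_gradedLT (LinearMap.mulLeft F (D ^ k)) (fun _ _ _ hb hn => by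
    simpa only [LinearMap.mulLeft_apply, dpow_mul_monomial] using
      monomial_mem_gradedLT _ hb (by push_cast; omega)) hx

theorem mul_ι_mul_upow_mem_gradedLT (g : H) (c : ℕ) {n : ℤ} {B : ℕ} {x : W}
    (hx : x ∈ W[n|<B]) : x * (ι g * U ^ c) ∈ W[n + c|<B + c] :=
  map_mem_gradedLT (LinearMap.mulRight F (ι g * U ^ c)) (fun _ _ _ hb hn => by
    simpa only [LinearMap.mulRight_apply, monomial_mul_ι_mul_upow] using
      monomial_mem_gradedLT _ (by omega) (by push_cast; omega)) hx

variable (θ z1) in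
def commCoeff (b k : ℕ) : H := ∏ j ∈ range b, ∏ i ∈ range k, (θ ^ (i + j)) z1

theorem isUnit_commCoeff (hz1 : IsUnit z1) (b k : ℕ) : IsUnit (commCoeff θ z1 b k) :=
  IsUnit.prod_iff.2 fun _ _ => IsUnit.prod_iff.2 fun _ _ => hz1.map _

theorem commCoeff_one_succ (k : ℕ) :
    commCoeff θ z1 1 (k + 1) = (θ ^ k) z1 * commCoeff θ z1 1 k := by
  simp [commCoeff, prod_range_succ, mul_comm]

theorem commCoeff_succ (b k : ℕ) :
    commCoeff θ z1 (b + 1) k = commCoeff θ z1 b k * (θ ^ b) (commCoeff θ z1 1 k) := by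
  rw [commCoeff, commCoeff, prod_range_succ, commCoeff, prod_range_one, map_prod]
  refine congrArg _ (prod_congr rfl fun i _ => ?_)
  rw [← AlgEquiv.mul_apply, ← pow_add, add_comm b, add_zero]

theorem u_mul_dpow_sub_mem (k : ℕ) :
    U * D ^ k - D ^ k * ι (commCoeff θ z1 1 k) * U ∈ W[1 - k|<1] := by
  induction k with
  | zero => simp [commCoeff]
  | succ k ih =>
    have hexpand : U * D ^ (k + 1) - D ^ (k + 1) * ι (commCoeff θ z1 1 (k + 1)) * U =
        ι z0 * D ^ k + D ^ 1 * (ι z1 * (U * D ^ k - D ^ k * ι (commCoeff θ z1 1 k) * U)) := by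
      have hz1 : ι z1 * (D ^ k * ι (commCoeff θ z1 1 k) * U) =
          D ^ k * ι ((θ ^ k) z1) * ι (commCoeff θ z1 1 k) * U := by
        rw [← mul_assoc, ← mul_assoc, ι_mul_dpow]
      rw [pow_succ', ← mul_assoc, u_mul_d, commCoeff_one_succ, map_mul, mul_sub, hz1, pow_one,
        mul_sub, add_mul]
      simp only [mul_assoc]
      abel
    rw [hexpand]
    refine add_mem ?_ ?_
    · rw [ι_mul_dpow, ← mul_one (_ * _), ← pow_zero U, ← monomial_apply]
      exact monomial_mem_gradedLT _ zero_lt_one (by push_cast; ring)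
    · simpa using dpow_mul_mem_gradedLT 1 (ι_mul_mem_gradedLT z1 ih)

theorem u_mul_monomial_mem (a b : ℕ) (h : H) : U * mono a b h ∈ W[b - a + 1|<b + 2] := by
  have hsplit : U * mono a b h = (U * D ^ a - D ^ a * ι (commCoeff θ z1 1 a) * U) * (ι h * U ^ b)
      + mono a 1 (commCoeff θ z1 1 a) * (ι h * U ^ b) := by
    rw [monomial_apply, monomial_apply, pow_one, sub_mul, sub_add_cancel]
    simp only [mul_assoc]
  rw [hsplit, monomial_mul_ι_mul_upow]
  refine add_mem (gradedLT_mono (B := 1 + b) (by omega) ?_)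
    (monomial_mem_gradedLT _ (by omega) (by push_cast; ring))
  rw [show (b - a + 1 : ℤ) = 1 - a + b by ring]
  exact mul_ι_mul_upow_mem_gradedLT h b (u_mul_dpow_sub_mem a)

theorem u_mul_mem_gradedLT {n : ℤ} {B : ℕ} {x : W} (hx : x ∈ W[n|<B]) :
    U * x ∈ W[n + 1|<B + 1] :=
  map_mem_gradedLT (LinearMap.mulLeft F U) (fun a b h hb hn => by
    rw [LinearMap.mulLeft_apply, ← hn]
    exact gradedLT_mono (by omega) (u_mul_monomial_mem a b h)) hx

theorem upow_mul_mem_gradedLT (k : ℕ) {n : ℤ} {B : ℕ} {x : W} (hx : x ∈ W[n|<B]) :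
    U ^ k * x ∈ W[n + k|<B + k] := by
  induction k with
  | zero => simpa using hx
  | succ k ih =>
    rw [pow_succ', mul_assoc, Nat.cast_succ, ← add_assoc, ← add_assoc]
    exact u_mul_mem_gradedLT ih

theorem monomial_mul_mem_gradedLT (a b : ℕ) (h : H) {n : ℤ} {B : ℕ} {y : W}
    (hy : y ∈ W[n|<B]) : mono a b h * y ∈ W[n + b - a|<B + b] := by
  rw [monomial_apply, mul_assoc, mul_assoc]
  exact dpow_mul_mem_gradedLT a (ι_mul_mem_gradedLT h (upow_mul_mem_gradedLT b hy))

theorem mul_mem_graded {j n : ℤ} {x y : W} (hx : x ∈ W[j]) (hy : y ∈ W[n]) :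
    x * y ∈ W[j + n] := by
  refine graded_le (S := W[j + n].comap (LinearMap.mulRight F y)) (fun a b h hab => ?_) hx
  refine graded_le (S := W[j + n].comap (LinearMap.mulLeft F (mono a b h)))
    (fun a' b' h' hn => ?_) hy
  refine gradedLT_le_graded _ (b' + 1 + b) ?_
  rw [show j + n = n + b - a by omega]
  exact monomial_mul_mem_gradedLT a b h (monomial_mem_gradedLT h' b'.lt_succ_self hn)

theorem upow_mul_dpow_sub_mem (b k : ℕ) :
    U ^ b * D ^ k - D ^ k * ι (commCoeff θ z1 b k) * U ^ b ∈ W[b - k|<b] := by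
  induction b with
  | zero => simp [commCoeff]
  | succ b ih =>
    have hcomm : D ^ k * ι (commCoeff θ z1 b k) * U ^ b * (ι (commCoeff θ z1 1 k) * U) =
        D ^ k * ι (commCoeff θ z1 (b + 1) k) * U ^ (b + 1) := by
      rw [commCoeff_succ b k, map_mul, pow_succ]
      simp only [mul_assoc]
      rw [← mul_assoc (U ^ b), upow_mul_ι]
      simp only [mul_assoc]
    have hsplit : U ^ (b + 1) * D ^ k - D ^ k * ι (commCoeff θ z1 (b + 1) k) * U ^ (b + 1) =
        U ^ b * (U * D ^ k - D ^ k * ι (commCoeff θ z1 1 k) * U)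
          + (U ^ b * D ^ k - D ^ k * ι (commCoeff θ z1 b k) * U ^ b)
            * (ι (commCoeff θ z1 1 k) * U ^ 1) := by
      rw [← hcomm, pow_one, pow_succ]
      simp only [mul_sub, sub_mul, mul_assoc]
      abel
    rw [hsplit]
    refine add_mem ?_ ?_
    · rw [show ((b + 1 : ℕ) - k : ℤ) = 1 - k + b by push_cast; ring, add_comm b 1]
      exact upow_mul_mem_gradedLT b (u_mul_dpow_sub_mem k)
    · rw [show ((b + 1 : ℕ) - k : ℤ) = b - k + (1 : ℕ) by push_cast; ring]
      exact mul_ι_mul_upow_mem_gradedLT _ 1 ih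

theorem monomial_mul_dpow_sub_mem (a b k : ℕ) (h : H) :
    mono a b h * D ^ k - mono (a + k) b ((θ ^ k) h * commCoeff θ z1 b k) ∈ W[b - a - k|<b] := by
  have hsplit : mono a b h * D ^ k - mono (a + k) b ((θ ^ k) h * commCoeff θ z1 b k) =
      D ^ a * (ι h * (U ^ b * D ^ k - D ^ k * ι (commCoeff θ z1 b k) * U ^ b)) := by
    simp only [monomial_apply, map_mul, pow_add, mul_sub, mul_assoc]
    rw [← mul_assoc (ι h) (D ^ k), ι_mul_dpow]
    simp only [mul_assoc]
  rw [hsplit, show (b - a - k : ℤ) = b - k - a by ring]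
  exact dpow_mul_mem_gradedLT a (ι_mul_mem_gradedLT h (upow_mul_dpow_sub_mem b k))

theorem graded_natCast_le_map_mul_upow (k : ℕ) :
    W[k] ≤ W[0].map (LinearMap.mulRight F (U ^ k)) :=
  graded_le fun a b h hn => ⟨mono a a h, monomial_mem_graded h (sub_self _), by
    obtain rfl : b = a + k := by omega
    simp only [LinearMap.mulRight_apply, monomial_apply, mul_assoc, pow_add]⟩

theorem graded_neg_le_map_mul_dpow (hz1 : IsUnit z1) (k : ℕ) :
    W[-k] ≤ W[0].map (LinearMap.mulRight F (D ^ k)) := by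
  suffices ∀ B, W[-k|<B] ≤ W[0].map (LinearMap.mulRight F (D ^ k)) from
    graded_le fun a b h hn => this (b + 1) (monomial_mem_gradedLT h b.lt_succ_self hn)
  intro B
  induction B with
  | zero => simp [gradedLT_zero]
  | succ B ih =>
    refine gradedLT_le fun a b g hb hn => ?_
    obtain rfl : a = b + k := by omega
    obtain ⟨c, hc⟩ := isUnit_commCoeff (θ := θ) hz1 b k
    set h := (θ ^ k).symm (g * ↑c⁻¹)
    have hg : (θ ^ k) h * commCoeff θ z1 b k = g := by
      rw [AlgEquiv.apply_symm_apply, ← hc, mul_assoc, Units.inv_mul, mul_one]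
    have hlower : mono b b h * D ^ k - mono (b + k) b g ∈ W[-k|<b] := by
      rw [← hg, show (-k : ℤ) = b - b - k by ring]
      exact monomial_mul_dpow_sub_mem b b k h
    rw [← sub_sub_cancel (mono b b h * D ^ k) (mono (b + k) b g)]
    exact sub_mem ⟨_, monomial_mem_graded h (sub_self _), rfl⟩
      (ih (gradedLT_mono (Nat.lt_succ_iff.1 hb) hlower))

/- A faithful representation of `W` on normal forms: `Finsupp.single (a, b) x` stands for the
monomial `d^a x u^b`. -/

variable (θ) in
noncomputable def hAct (h : H) : Module.End F (ℕ × ℕ →₀ H) :=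
  Finsupp.lsum F fun p => Finsupp.lsingle p ∘ₗ LinearMap.mulLeft F ((θ ^ p.1) h)

variable (F H) in
noncomputable def dAct : Module.End F (ℕ × ℕ →₀ H) :=
  Finsupp.lmapDomain H F fun p => (p.1 + 1, p.2)

variable (θ z0 z1) in
/-- `u · d^(a+1) x u^b = (z0 + d z1 u) · d^a x u^b`. -/
noncomputable def uActSingle : ℕ → ℕ → H →ₗ[F] (ℕ × ℕ →₀ H)
  | 0, b => Finsupp.lsingle (0, b + 1) ∘ₗ θ.toLinearMap
  | a + 1, b => Finsupp.lsingle (a, b) ∘ₗ LinearMap.mulLeft F ((θ ^ a) z0)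
      + (dAct F H * hAct θ z1) ∘ₗ uActSingle a b

variable (θ z0 z1) in
noncomputable def uAct : Module.End F (ℕ × ℕ →₀ H) :=
  Finsupp.lsum F fun p => uActSingle θ z0 z1 p.1 p.2

theorem hAct_single (h : H) (p : ℕ × ℕ) (x : H) :
    hAct θ h (Finsupp.single p x) = Finsupp.single p ((θ ^ p.1) h * x) := by
  simp [hAct]

theorem dAct_single (p : ℕ × ℕ) (x : H) :
    dAct F H (Finsupp.single p x) = Finsupp.single (p.1 + 1, p.2) x := by
  simp [dAct]

theorem uAct_single_zero (b : ℕ) (x : H) :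
    uAct θ z0 z1 (Finsupp.single (0, b) x) = Finsupp.single (0, b + 1) (θ x) := by
  simp [uAct, uActSingle]

theorem uAct_single_succ (a b : ℕ) (x : H) :
    uAct θ z0 z1 (Finsupp.single (a + 1, b) x) = Finsupp.single (a, b) ((θ ^ a) z0 * x)
      + dAct F H (hAct θ z1 (uAct θ z0 z1 (Finsupp.single (a, b) x))) := by
  simp [uAct, uActSingle]

theorem hAct_one : hAct θ (1 : H) = 1 :=
  Finsupp.lhom_ext fun p x => by simp [hAct_single]

theorem hAct_add (g h : H) : hAct θ (g + h) = hAct θ g + hAct θ h :=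
  Finsupp.lhom_ext fun p x => by simp [hAct_single, add_mul]

theorem hAct_mul (g h : H) : hAct θ (g * h) = hAct θ g * hAct θ h :=
  Finsupp.lhom_ext fun p x => by simp only [Module.End.mul_apply, hAct_single, map_mul, mul_assoc]

theorem hAct_smul (r : F) (h : H) : hAct θ (r • h) = r • hAct θ h :=
  Finsupp.lhom_ext fun p x => by
    simp only [LinearMap.smul_apply, hAct_single, map_smul, smul_mul_assoc, Finsupp.smul_single]

theorem hAct_mul_dAct (g : H) : hAct θ g * dAct F H = dAct F H * hAct θ (θ g) :=
  Finsupp.lhom_ext fun p x => by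
    simp only [Module.End.mul_apply, hAct_single, dAct_single, pow_succ, AlgEquiv.mul_apply]

theorem hAct_comm (g h : H) : hAct θ g * hAct θ h = hAct θ h * hAct θ g := by
  rw [← hAct_mul, mul_comm, hAct_mul]

theorem uAct_mul_hAct (h : H) : uAct θ z0 z1 * hAct θ h = hAct θ (θ h) * uAct θ z0 z1 := by
  refine Finsupp.lhom_ext fun ⟨a, b⟩ x => ?_
  simp only [Module.End.mul_apply, hAct_single]
  induction a generalizing h with
  | zero => simp only [uAct_single_zero, hAct_single, pow_zero, AlgEquiv.one_apply, map_mul]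
  | succ a ih =>
    rw [uAct_single_succ, uAct_single_succ, map_add, hAct_single, pow_succ, AlgEquiv.mul_apply, ih]
    congr 1
    · exact congrArg _ (mul_left_comm _ _ _)
    · rw [← Module.End.mul_apply (hAct θ (θ h)), hAct_mul_dAct, Module.End.mul_apply,
        ← Module.End.mul_apply (hAct θ (θ (θ h))) (hAct θ z1), hAct_comm, Module.End.mul_apply]

theorem uAct_mul_dAct :
    uAct θ z0 z1 * dAct F H = hAct θ z0 + dAct F H * hAct θ z1 * uAct θ z0 z1 :=
  Finsupp.lhom_ext fun ⟨a, b⟩ x => by simp [dAct_single, uAct_single_succ, hAct_single]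

variable (F H θ z0 z1) in
noncomputable def rep : W →ₐ[F] Module.End F (ℕ × ℕ →₀ H) :=
  RingQuot.liftAlgHom F ⟨FreeAlgebra.lift F fun
    | .base h => hAct θ h
    | .d => dAct F H
    | .u => uAct θ z0 z1, by
    rintro _ _ ⟨⟩ <;>
      simp only [map_one, map_add, map_mul, map_smul, FreeAlgebra.lift_ι_apply, hAct_one,
        hAct_add, hAct_mul, hAct_smul, uAct_mul_hAct, hAct_mul_dAct, uAct_mul_dAct]⟩

theorem rep_ι (h : H) : rep F H θ z0 z1 (ι h) = hAct θ h := by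
  simp [rep, inclAlgHom_apply, incl]

theorem rep_d : rep F H θ z0 z1 D = dAct F H := by
  simp [rep, dd]

theorem rep_u : rep F H θ z0 z1 U = uAct θ z0 z1 := by
  simp [rep, uu]

variable (F H θ z0 z1) in
noncomputable def normalForm : W →ₗ[F] (ℕ × ℕ →₀ H) :=
  LinearMap.applyₗ (Finsupp.single (0, 0) 1) ∘ₗ (rep F H θ z0 z1).toLinearMap

theorem normalForm_monomial (a b : ℕ) (h : H) :
    normalForm F H θ z0 z1 (mono a b h) = Finsupp.single (a, b) h := by
  have hu : ∀ b : ℕ, (uAct θ z0 z1 ^ b) (Finsupp.single (0, 0) 1) = Finsupp.single (0, b) 1 := by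
    intro b
    induction b with
    | zero => rfl
    | succ b ih => rw [pow_succ', Module.End.mul_apply, ih, uAct_single_zero, map_one]
  have hd : ∀ a : ℕ, (dAct F H ^ a) (Finsupp.single (0, b) h) = Finsupp.single (a, b) h := by
    intro a
    induction a with
    | zero => rfl
    | succ a ih => rw [pow_succ', Module.End.mul_apply, ih, dAct_single]
  simp only [normalForm, LinearMap.comp_apply, AlgHom.toLinearMap_apply,
    LinearMap.applyₗ_apply_apply, monomial_apply, map_mul, map_pow, rep_ι, rep_d, rep_u,
    Module.End.mul_apply, hu, hAct_single,
    pow_zero, AlgEquiv.one_apply, mul_one, hd]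

theorem normalForm_apply_eq_zero_of_mem_gradedLT {n : ℤ} {B a b : ℕ} (hb : B ≤ b) {x : W}
    (hx : x ∈ W[n|<B]) : normalForm F H θ z0 z1 x (a, b) = 0 :=
  gradedLT_le (S := LinearMap.ker (Finsupp.lapply (a, b) ∘ₗ normalForm F H θ z0 z1))
    (fun a' b' h hb' _ => by
      simp only [LinearMap.mem_ker, LinearMap.comp_apply, normalForm_monomial,
        Finsupp.lapply_apply]
      exact Finsupp.single_eq_of_ne (by simp only [ne_eq, Prod.mk.injEq]; omega)) hx

theorem eq_zero_of_mul_eq_zero_of_leading {x : W} {k₁ k₂ : ℕ} (φ : ℕ → H → H)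
    (hφ : ∀ B g, φ B g = 0 → g = 0)
    (hlead : ∀ B g, mono B B g * x - mono (B + k₁) (B + k₂) (φ B g) ∈ W[k₂ - k₁|<B + k₂])
    {w : W} (hw : w ∈ W[0]) (hwx : w * x = 0) : w = 0 := by
  have hmul : ∀ {B w}, w ∈ W[0|<B] → w * x ∈ W[k₂ - k₁|<B + k₂] := fun hw =>
    map_mem_gradedLT (LinearMap.mulRight F x) (fun a b g hb hn => by
      obtain rfl : a = b := by omega
      rw [LinearMap.mulRight_apply,
        ← sub_add_cancel (mono a a g * x) (mono (a + k₁) (a + k₂) (φ a g))]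
      exact gradedLT_mono (by omega) (add_mem (gradedLT_mono (Nat.le_succ _) (hlead a g))
        (monomial_mem_gradedLT _ (Nat.lt_succ_self _) (by push_cast; ring)))) hw
  suffices ∀ B, ∀ w ∈ W[0|<B], w * x = 0 → w = 0 from
    (exists_mem_gradedLT hw).elim fun B hB => this B w hB hwx
  intro B
  induction B with
  | zero => simp [gradedLT_zero]
  | succ B ih =>
    intro w hw hwx
    obtain ⟨g, hg⟩ := exists_sub_monomial_mem_gradedLT (a := B) (sub_self _) hw
    have hsplit : w * x = mono (B + k₁) (B + k₂) (φ B g)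
        + ((mono B B g * x - mono (B + k₁) (B + k₂) (φ B g)) + (w - mono B B g) * x) := by
      rw [sub_mul]; abel
    -- at `(B + k₁, B + k₂)` the normal form of `w * x` sees only the leading monomial
    have hφg : φ B g = 0 := by
      have := DFunLike.congr_fun (congrArg (normalForm F H θ z0 z1) hsplit) (B + k₁, B + k₂)
      rwa [hwx, map_add, map_add, Finsupp.add_apply, Finsupp.add_apply, normalForm_monomial,
        Finsupp.single_eq_same, normalForm_apply_eq_zero_of_mem_gradedLT le_rfl (hlead B g),
        normalForm_apply_eq_zero_of_mem_gradedLT le_rfl (hmul hg), add_zero, add_zero, map_zero,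
        Finsupp.zero_apply, eq_comm] at this
    rw [hφ B g hφg, map_zero, sub_zero] at hg
    exact ih w hg hwx

theorem upow_mem_graded (k : ℕ) : U ^ k ∈ W[k] := by
  rw [show U ^ k = mono 0 k 1 by simp [monomial_apply]]
  exact monomial_mem_graded 1 (sub_zero _)

theorem dpow_mem_graded (k : ℕ) : D ^ k ∈ W[-k] := by
  rw [show D ^ k = mono k 0 1 by simp [monomial_apply]]
  exact monomial_mem_graded 1 (zero_sub _)

theorem eq_zero_of_mul_upow_eq_zero (k : ℕ) {w : W} (hw : w ∈ W[0]) (hwx : w * U ^ k = 0) :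
    w = 0 :=
  eq_zero_of_mul_eq_zero_of_leading (k₁ := 0) (k₂ := k) (fun _ g => g) (fun _ _ => id)
    (fun B g => by simp [monomial_apply, mul_assoc, pow_add]) hw hwx

theorem eq_zero_of_mul_dpow_eq_zero (hz1 : IsUnit z1) (k : ℕ) {w : W} (hw : w ∈ W[0])
    (hwx : w * D ^ k = 0) : w = 0 :=
  eq_zero_of_mul_eq_zero_of_leading (k₁ := k) (k₂ := 0)
    (fun B g => (θ ^ k) g * commCoeff θ z1 B k)
    (fun B g hg => (map_eq_zero_iff _ (θ ^ k).injective).1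
      ((isUnit_commCoeff hz1 B k).mul_left_eq_zero.1 hg))
    (fun B g => by simpa using monomial_mul_dpow_sub_mem B B k g) hw hwx

end GWA

theorem graded_pieces_free_rank_one (hz1 : IsUnit z1) :
    (∀ x ∈ GWA.graded F H θ z0 z1 0, ∀ y ∈ GWA.graded F H θ z0 z1 0,
        x * y ∈ GWA.graded F H θ z0 z1 0) ∧
    (∀ n : ℤ, ∀ x ∈ GWA.graded F H θ z0 z1 0, ∀ y ∈ GWA.graded F H θ z0 z1 n,
        x * y ∈ GWA.graded F H θ z0 z1 n) ∧
    (∀ n : ℤ, ∃ x ∈ GWA.graded F H θ z0 z1 n,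
        ∀ y ∈ GWA.graded F H θ z0 z1 n,
          ∃! a : GWA F H θ z0 z1, a ∈ GWA.graded F H θ z0 z1 0 ∧ a * x = y) := by
  refine ⟨fun x hx y hy => by simpa using GWA.mul_mem_graded hx hy,
    fun n x hx y hy => by simpa using GWA.mul_mem_graded hx hy, fun n => ?_⟩
  obtain ⟨k, rfl | rfl⟩ := Int.eq_nat_or_neg n
  · exact ⟨_, GWA.upow_mem_graded k, fun y => Submodule.existsUnique_mul_eq_of_le_map_mulRight
      (GWA.graded_natCast_le_map_mul_upow k) fun w => GWA.eq_zero_of_mul_upow_eq_zero k⟩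
  · exact ⟨_, GWA.dpow_mem_graded k, fun y => Submodule.existsUnique_mul_eq_of_le_map_mulRight
      (GWA.graded_neg_le_map_mul_dpow hz1 k) fun w => GWA.eq_zero_of_mul_dpow_eq_zero hz1 k⟩
end
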